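/- arXiv:1901.06824 — 3 statements merged into one kernel-verified Lean document; each statement's English description precedes it below -/
import Mathlib

section
/- There exists a constant C > 0 such that for every integer n ≥ 3, every nonsplit directed graph on n nodes that contains all self-loops has radius at most C·log log n. (In particular, in such a graph there exists a node from which every node is reachable by a path of length at most C·log log n.) -/
open scoped Classical

/-- `reachIn G k u v` : there is a directed path (walk) of length exactly `k` from `u` to `v`. -/
def reachIn {n : ℕ} (G : Fin n → Fin n → Prop) : ℕ → Fin n → Fin n → Prop
  | 0, u, v => u = v
  | k + 1, u, v => ∃ w, G u w ∧ reachIn G k w v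

section Aux

variable {n : ℕ} {G : Fin n → Fin n → Prop}

lemma reachIn_zero {u v : Fin n} : reachIn G 0 u v ↔ u = v := Iff.rfl

lemma reachIn_succ {k : ℕ} {u v : Fin n} :
    reachIn G (k + 1) u v ↔ ∃ w, G u w ∧ reachIn G k w v := Iff.rfl

lemma reachIn_trans {a b : ℕ} {u w v : Fin n}
    (h1 : reachIn G a u w) (h2 : reachIn G b w v) : reachIn G (a + b) u v := by
  induction a generalizing u with
  | zero =>
      rw [reachIn_zero] at h1
      rw [h1] at *
      simpa using h2
  | succ a ih =>
      obtain ⟨x, hx, hr⟩ := h1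
      have hEq : a + 1 + b = (a + b) + 1 := by omega
      rw [hEq, reachIn_succ]
      exact ⟨x, hx, ih hr⟩

/-- Every nonempty set of size at most `2^t` has a common in-neighbor at distance exactly `t`. -/
lemma common_inNbr (hrefl : ∀ i : Fin n, G i i)
    (hns : ∀ i j : Fin n, ∃ k, G k i ∧ G k j) :
    ∀ (t : ℕ) (S : Finset (Fin n)), S.Nonempty → S.card ≤ 2 ^ t →
      ∃ z, ∀ v ∈ S, reachIn G t z v := by
  intro t
  induction t with
  | zero =>
      rintro S ⟨v, hv⟩ hcard
      refine ⟨v, fun w hw => ?_⟩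
      have h1 : S.card ≤ 1 := by simpa using hcard
      exact Finset.card_le_one.mp h1 v hv w hw
  | succ t ih =>
      intro S hne hcard
      by_cases hle : S.card ≤ 2 ^ t
      · obtain ⟨z, hz⟩ := ih S hne hle
        exact ⟨z, fun v hv => ⟨z, hrefl z, hz v hv⟩⟩
      · push_neg at hle
        obtain ⟨S₁, hsub, hc1⟩ := Finset.exists_subset_card_eq (le_of_lt hle)
        have hS1ne : S₁.Nonempty := by
          rw [← Finset.card_pos, hc1]; positivity
        have hS2ne : (S \ S₁).Nonempty := by
          rw [← Finset.card_pos, Finset.card_sdiff_of_subset hsub, hc1]; omega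
        have hc2 : (S \ S₁).card ≤ 2 ^ t := by
          rw [Finset.card_sdiff_of_subset hsub, hc1]
          have h2 : (2:ℕ) ^ (t + 1) = 2 * 2 ^ t := by ring
          have h3 : S.card ≤ 2 ^ (t+1) := hcard
          omega
        obtain ⟨z₁, hz₁⟩ := ih S₁ hS1ne hc1.le
        obtain ⟨z₂, hz₂⟩ := ih (S \ S₁) hS2ne hc2
        obtain ⟨k, hk₁, hk₂⟩ := hns z₁ z₂
        refine ⟨k, fun v hv => ?_⟩
        by_cases hv1 : v ∈ S₁
        · exact ⟨z₁, hk₁, hz₁ v hv1⟩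
        · exact ⟨z₂, hk₂, hz₂ v (Finset.mem_sdiff.mpr ⟨hv, hv1⟩)⟩

lemma descFactorial_aux : ∀ (r d s : ℕ), 1 ≤ r → r ≤ d → 2 * d < s →
    2 ^ r * d.descFactorial r < s.descFactorial r := by
  intro r
  induction r with
  | zero => intro d s h; omega
  | succ r ih =>
      intro d s _ hrd hds
      rcases Nat.eq_zero_or_pos r with hr0 | hrpos
      · subst hr0
        simp only [pow_one, Nat.descFactorial_succ, Nat.descFactorial_zero, Nat.sub_zero,
          Nat.mul_one]
        omega
      · have hrd' : r ≤ d := by omega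
        have hIH := ih d s hrpos hrd' hds
        rw [Nat.descFactorial_succ, Nat.descFactorial_succ]
        have hposS : 0 < s.descFactorial r := by
          rcases Nat.eq_zero_or_pos (s.descFactorial r) with h0 | h
          · exfalso
            have := Nat.descFactorial_eq_zero_iff_lt.mp h0
            omega
          · exact h
        have hstep1 : 2 ^ (r + 1) * ((d - r) * d.descFactorial r)
            = (2 * (d - r)) * (2 ^ r * d.descFactorial r) := by ring
        have hstep2 : (2 * (d - r)) * (2 ^ r * d.descFactorial r)
            < (2 * (d - r)) * s.descFactorial r := by
          have hpos2 : 0 < 2 * (d - r) := by omega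
          exact mul_lt_mul_of_pos_left hIH hpos2
        have hstep3 : (2 * (d - r)) * s.descFactorial r ≤ (s - r) * s.descFactorial r := by
          apply Nat.mul_le_mul_right
          omega
        omega

lemma card_le_two_mul (r s d N : ℕ) (hr : 1 ≤ r) (hrs : r ≤ s) (hN : N ≤ 2 ^ r)
    (h : s.choose r ≤ N * d.choose r) : s ≤ 2 * d := by
  by_contra hcon
  push_neg at hcon
  have hrd : r ≤ d := by
    by_contra hrd
    push_neg at hrd
    rw [Nat.choose_eq_zero_of_lt hrd, Nat.mul_zero] at h
    have := Nat.choose_pos hrs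
    omega
  have haux := descFactorial_aux r d s hr hrd hcon
  have hd : d.descFactorial r = r.factorial * d.choose r :=
    Nat.descFactorial_eq_factorial_mul_choose d r
  have hs : s.descFactorial r = r.factorial * s.choose r :=
    Nat.descFactorial_eq_factorial_mul_choose s r
  rw [hd, hs] at haux
  have h2 : r.factorial * s.choose r ≤ r.factorial * (N * d.choose r) :=
    Nat.mul_le_mul_left _ h
  have h3 : r.factorial * (N * d.choose r) ≤ r.factorial * (2 ^ r * d.choose r) :=
    Nat.mul_le_mul_left _ (Nat.mul_le_mul_right _ hN)
  have h4 : r.factorial * (2 ^ r * d.choose r) = 2 ^ r * (r.factorial * d.choose r) := by ring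
  omega

/-- Counting lemma: some node `t`-covers at least half of `S`. -/
lemma exists_half (hn3 : 3 ≤ n) (hrefl : ∀ i : Fin n, G i i)
    (hns : ∀ i j : Fin n, ∃ k, G k i ∧ G k j)
    (r t : ℕ) (hr1 : 1 ≤ r) (hrt : r ≤ 2 ^ t) (hnr : n ≤ 2 ^ r)
    (S : Finset (Fin n)) (hS : r ≤ S.card) :
    ∃ z, S.card ≤ 2 * (S.filter fun v => reachIn G t z v).card := by
  have v0 : Fin n := ⟨0, by omega⟩
  set cf : Finset (Fin n) → Fin n := fun R =>
    if h : ∃ z, ∀ v ∈ R, reachIn G t z v then h.choose else v0 with hcfdef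
  have hcf_spec : ∀ (R : Finset (Fin n)), (∃ z, ∀ v ∈ R, reachIn G t z v) →
      ∀ v ∈ R, reachIn G t (cf R) v := by
    intro R hex v hv
    rw [hcfdef]
    simp only [dif_pos hex]
    exact hex.choose_spec v hv
  have hexists : ∀ R ∈ S.powersetCard r, ∃ z, ∀ v ∈ R, reachIn G t z v := by
    intro R hR
    obtain ⟨hRS, hRc⟩ := Finset.mem_powersetCard.mp hR
    apply common_inNbr hrefl hns t R
    · rw [← Finset.card_pos, hRc]; omega
    · rw [hRc]; exact hrt
  have hcount : S.card.choose r ≤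
      ∑ z : Fin n, ((S.filter fun v => reachIn G t z v).card).choose r := by
    have h1 : (S.powersetCard r).card = ∑ z : Fin n,
        ((S.powersetCard r).filter fun R => cf R = z).card :=
      Finset.card_eq_sum_card_fiberwise (fun R _ => Finset.mem_univ _)
    rw [Finset.card_powersetCard] at h1
    rw [h1]
    apply Finset.sum_le_sum
    intro z _
    rw [← Finset.card_powersetCard r (S.filter fun v => reachIn G t z v)]
    apply Finset.card_le_card
    intro R hR
    rw [Finset.mem_filter] at hR
    obtain ⟨hRP, hRz⟩ := hR
    obtain ⟨hRS, hRc⟩ := Finset.mem_powersetCard.mp hRP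
    rw [Finset.mem_powersetCard]
    refine ⟨fun v hv => ?_, hRc⟩
    rw [Finset.mem_filter]
    exact ⟨hRS hv, hRz ▸ hcf_spec R (hexists R hRP) v hv⟩
  obtain ⟨z, -, hz⟩ := Finset.exists_max_image Finset.univ
      (fun z : Fin n => (S.filter fun v => reachIn G t z v).card) ⟨v0, Finset.mem_univ v0⟩
  refine ⟨z, ?_⟩
  have hsum : ∑ z' : Fin n, ((S.filter fun v => reachIn G t z' v).card).choose r
      ≤ n * ((S.filter fun v => reachIn G t z v).card).choose r := by
    calc ∑ z' : Fin n, ((S.filter fun v => reachIn G t z' v).card).choose r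
        ≤ ∑ _z' : Fin n, ((S.filter fun v => reachIn G t z v).card).choose r :=
          Finset.sum_le_sum fun z' _ => Nat.choose_le_choose r (hz z' (Finset.mem_univ _))
      _ = n * ((S.filter fun v => reachIn G t z v).card).choose r := by
          rw [Finset.sum_const, Finset.card_univ, Fintype.card_fin, smul_eq_mul]
  exact card_le_two_mul r S.card _ n hr1 hS hnr (le_trans hcount hsum)

/-- Greedy covering: a set of at most `m + r` centers covering `S` within distance `t₀`. -/
lemma greedy (hn3 : 3 ≤ n) (hrefl : ∀ i : Fin n, G i i)
    (hns : ∀ i j : Fin n, ∃ k, G k i ∧ G k j)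
    (r t₀ : ℕ) (hr1 : 1 ≤ r) (hrt : r ≤ 2 ^ t₀) (hnr : n ≤ 2 ^ r) :
    ∀ (m : ℕ) (S : Finset (Fin n)), S.card ≤ 2 ^ m * r →
      ∃ D : Finset (Fin n), D.card ≤ m + r ∧
        ∀ v ∈ S, ∃ d ∈ D, ∃ k ≤ t₀, reachIn G k d v := by
  intro m
  induction m with
  | zero =>
      intro S hS
      refine ⟨S, by simpa using hS, fun v hv => ⟨v, hv, 0, Nat.zero_le _, ?_⟩⟩
      rfl
  | succ m ih =>
      intro S hS
      by_cases hle : S.card ≤ 2 ^ m * r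
      · obtain ⟨D, hD1, hD2⟩ := ih S hle
        exact ⟨D, by omega, hD2⟩
      · push_neg at hle
        have hrS : r ≤ S.card := by
          have : r ≤ 2 ^ m * r := Nat.le_mul_of_pos_left r (by positivity)
          omega
        obtain ⟨z, hz⟩ := exists_half hn3 hrefl hns r t₀ hr1 hrt hnr S hrS
        set Cov := S.filter fun v => reachIn G t₀ z v with hCovdef
        have hCsub : Cov ⊆ S := Finset.filter_subset _ _
        have hS' : (S \ Cov).card ≤ 2 ^ m * r := by
          have h1 : (S \ Cov).card = S.card - Cov.card := Finset.card_sdiff_of_subset hCsub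
          have h3 : (2:ℕ) ^ (m + 1) * r = 2 * (2 ^ m * r) := by ring
          have hCle : Cov.card ≤ S.card := Finset.card_le_card hCsub
          omega
        obtain ⟨D, hD1, hD2⟩ := ih (S \ Cov) hS'
        refine ⟨insert z D, ?_, ?_⟩
        · have := Finset.card_insert_le z D
          omega
        · intro v hv
          by_cases hvc : v ∈ Cov
          · exact ⟨z, Finset.mem_insert_self _ _, t₀, le_refl _,
              (Finset.mem_filter.mp hvc).2⟩
          · obtain ⟨d, hd, k, hk, hr'⟩ := hD2 v (Finset.mem_sdiff.mpr ⟨hv, hvc⟩)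
            exact ⟨d, Finset.mem_insert_of_mem hd, k, hk, hr'⟩

end Aux

lemma numeric_bound (n : ℕ) (hn : 3 ≤ n) :
    ((2 * Nat.clog 2 (Nat.clog 2 n) + 1 : ℕ) : ℝ) ≤ 700 * Real.log (Real.log n) := by
  have hn3R : (3:ℝ) ≤ (n:ℝ) := by exact_mod_cast hn
  -- lower bound on log 3
  have hlog3 : (1.09:ℝ) ≤ Real.log 3 := by
    rw [Real.le_log_iff_exp_le (by norm_num : (0:ℝ) < 3)]
    have he : Real.exp 1 < 2.7182818286 := Real.exp_one_lt_d9
    have h9 : (-0.09:ℝ) + 1 ≤ Real.exp (-0.09) := Real.add_one_le_exp _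
    rw [Real.exp_neg] at h9
    have hpos : (0:ℝ) < Real.exp 0.09 := Real.exp_pos _
    have h9' : Real.exp (0.09:ℝ) ≤ 1 / 0.91 := by
      rw [le_div_iff₀ (by norm_num : (0:ℝ) < 0.91)]
      have := mul_le_mul_of_nonneg_left h9 (le_of_lt hpos)
      rw [mul_inv_cancel₀ (ne_of_gt hpos)] at this
      linarith
    have heq : Real.exp (1.09:ℝ) = Real.exp 1 * Real.exp 0.09 := by
      rw [← Real.exp_add]; norm_num
    rw [heq]
    nlinarith [Real.exp_pos (1:ℝ)]
  have hlogn : (1.09:ℝ) ≤ Real.log n :=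
    le_trans hlog3 (Real.log_le_log (by norm_num) hn3R)
  have hloglogn : (1/13 : ℝ) ≤ Real.log (Real.log n) := by
    have h1 : Real.log (1.09:ℝ) ≤ Real.log (Real.log n) :=
      Real.log_le_log (by norm_num) hlogn
    have h2 : Real.log ((1.09:ℝ)⁻¹) ≤ (1.09:ℝ)⁻¹ - 1 :=
      Real.log_le_sub_one_of_pos (by norm_num)
    rw [Real.log_inv] at h2
    have : (1/13:ℝ) ≤ Real.log (1.09:ℝ) := by linarith [h2]
    linarith
  set a := Nat.clog 2 n with hadef
  set t := Nat.clog 2 a with htdef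
  by_cases hts : t ≤ 3
  · have : ((2 * t + 1 : ℕ) : ℝ) ≤ 7 := by
      have : 2 * t + 1 ≤ 7 := by omega
      exact_mod_cast this
    linarith
  · push_neg at hts
    have ha2 : 2 ≤ a := by
      by_contra hc
      push_neg at hc
      have h1 : n ≤ 2 ^ a := Nat.le_pow_clog (by norm_num) n
      have h2 : (2:ℕ) ^ a ≤ 2 ^ 1 := Nat.pow_le_pow_right (by norm_num) (by omega)
      simp at h2
      omega
    obtain ⟨e, he⟩ : ∃ e, t = e + 4 := ⟨t - 4, by omega⟩
    have h1 : 2 ^ (t - 1) < a := Nat.pow_pred_clog_lt_self (by norm_num) (by omega : 1 < a)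
    have h2 : 2 ^ (a - 1) < n := Nat.pow_pred_clog_lt_self (by norm_num) (by omega : 1 < n)
    have h3 : (2:ℕ) ^ (2 ^ (e + 3)) ≤ 2 ^ (a - 1) := by
      apply Nat.pow_le_pow_right (by norm_num)
      have ht1 : t - 1 = e + 3 := by omega
      rw [ht1] at h1
      omega
    have h4 : (2:ℕ) ^ (2 ^ (e + 3)) ≤ n := by omega
    have hlog2 : (0.6931471803:ℝ) < Real.log 2 := Real.log_two_gt_d9
    have h5 : ((2:ℝ) ^ ((2:ℕ) ^ (e + 3))) ≤ (n:ℝ) := by exact_mod_cast h4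
    have h6 : (((2:ℕ) ^ (e + 3) : ℕ) : ℝ) * Real.log 2 ≤ Real.log n := by
      rw [← Real.log_pow]
      exact Real.log_le_log (by positivity) h5
    have h7 : ((2:ℝ) ^ (e + 2)) ≤ Real.log n := by
      have hc : (((2:ℕ) ^ (e + 3) : ℕ) : ℝ) = 2 * (2:ℝ) ^ (e + 2) := by
        push_cast
        ring
      rw [hc] at h6
      nlinarith [pow_pos (show (0:ℝ) < 2 by norm_num) (e + 2)]
    have h8 : ((e:ℝ) + 2) * Real.log 2 ≤ Real.log (Real.log n) := by
      have hmono := Real.log_le_log (by positivity : (0:ℝ) < (2:ℝ) ^ (e + 2)) h7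
      rw [Real.log_pow] at hmono
      have : (((e:ℕ) + 2 : ℕ) : ℝ) = (e:ℝ) + 2 := by push_cast; ring
      rw [this] at hmono
      exact hmono
    have h9 : ((e:ℝ) + 2) / 2 ≤ Real.log (Real.log n) := by nlinarith
    have hK : ((2 * t + 1 : ℕ) : ℝ) = 2 * (e:ℝ) + 9 := by
      rw [he]; push_cast; ring
    rw [hK]
    linarith

/-- There exists a constant `C > 0` such that every nonsplit digraph with all self-loops
on `n ≥ 3` nodes has radius at most `C · log log n`: some node `u` reaches every node `v`
by a path of length at most `C · log log n`. -/
theorem nonsplit_radius_loglog :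
    ∃ C : ℝ, 0 < C ∧
      ∀ n : ℕ, 3 ≤ n →
        ∀ G : Fin n → Fin n → Prop,
          (∀ i, G i i) →
          (∀ i j, ∃ k, G k i ∧ G k j) →
          ∃ u : Fin n, ∀ v : Fin n,
            ∃ k : ℕ, (k : ℝ) ≤ C * Real.log (Real.log n) ∧ reachIn G k u v := by
  refine ⟨700, by norm_num, ?_⟩
  intro n hn G hrefl hns
  set r := Nat.clog 2 n with hrdef
  set t₀ := Nat.clog 2 r with ht0def
  have hnr : n ≤ 2 ^ r := Nat.le_pow_clog (by norm_num) n
  have hr2 : 2 ≤ r := by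
    by_contra hc
    push_neg at hc
    have h2 : (2:ℕ) ^ r ≤ 2 ^ 1 := Nat.pow_le_pow_right (by norm_num) (by omega)
    simp at h2
    omega
  have hrt : r ≤ 2 ^ t₀ := Nat.le_pow_clog (by norm_num) r
  have huniv : (Finset.univ : Finset (Fin n)).card ≤ 2 ^ r * r := by
    rw [Finset.card_univ, Fintype.card_fin]
    calc n ≤ 2 ^ r := hnr
      _ ≤ 2 ^ r * r := Nat.le_mul_of_pos_right _ (by omega)
  obtain ⟨D, hD1, hD2⟩ := greedy hn hrefl hns r t₀ (by omega) hrt hnr r Finset.univ huniv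
  have hDne : D.Nonempty := by
    obtain ⟨d, hd, -⟩ := hD2 ⟨0, by omega⟩ (Finset.mem_univ _)
    exact ⟨d, hd⟩
  have hDcard : D.card ≤ 2 ^ (t₀ + 1) := by
    have h2 : (2:ℕ) ^ (t₀ + 1) = 2 * 2 ^ t₀ := by ring
    omega
  obtain ⟨u, hu⟩ := common_inNbr hrefl hns (t₀ + 1) D hDne hDcard
  refine ⟨u, fun v => ?_⟩
  obtain ⟨d, hd, k, hk, hreach⟩ := hD2 v (Finset.mem_univ v)
  refine ⟨(t₀ + 1) + k, ?_, reachIn_trans (hu d hd) hreach⟩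
  have hKle : (t₀ + 1) + k ≤ 2 * t₀ + 1 := by omega
  calc ((t₀ + 1) + k : ℕ) ≤ ((2 * t₀ + 1 : ℕ) : ℝ) := by exact_mod_cast hKle
    _ ≤ 700 * Real.log (Real.log n) := numeric_bound n hn
end

section
/- Let U and W be finite sets with |U| = k and |W| = n, where n ≥ 8 and k ≥ ⌊ln n⌋, and let f be a function from the ⌊ln n⌋-element subsets of U to W. Then there exists some w ∈ W such that |⋃ f⁻¹[{w}]| ≥ k/e⁴, where ⋃ f⁻¹[{w}] denotes the union of all ⌊ln n⌋-element subsets S of U with f(S) = w. -/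
private lemma desc_aux (m c k : ℕ) (h : c ≤ k) :
    c.descFactorial m * k ^ m ≤ k.descFactorial m * c ^ m := by
  induction m with
  | zero => simp
  | succ m ih =>
    rw [Nat.descFactorial_succ, Nat.descFactorial_succ, pow_succ, pow_succ]
    calc (c - m) * c.descFactorial m * (k ^ m * k)
        = ((c - m) * k) * (c.descFactorial m * k ^ m) := by ring
      _ ≤ ((k - m) * c) * (k.descFactorial m * c ^ m) := by
          refine Nat.mul_le_mul ?_ ih
          rcases le_or_gt c m with h1 | h1
          · simp [Nat.sub_eq_zero_of_le h1]
          · rw [Nat.sub_mul, Nat.sub_mul, mul_comm c k]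
            exact Nat.sub_le_sub_left (Nat.mul_le_mul_left m h) _
      _ = (k - m) * k.descFactorial m * (c ^ m * c) := by ring

private lemma choose_aux (m c k : ℕ) (h : c ≤ k) :
    c.choose m * k ^ m ≤ k.choose m * c ^ m := by
  have h2 := desc_aux m c k h
  rw [Nat.descFactorial_eq_factorial_mul_choose, Nat.descFactorial_eq_factorial_mul_choose] at h2
  have h3 : m.factorial * (c.choose m * k ^ m) ≤ m.factorial * (k.choose m * c ^ m) := by
    calc m.factorial * (c.choose m * k ^ m) = m.factorial * c.choose m * k ^ m := by ring
      _ ≤ m.factorial * k.choose m * c ^ m := h2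
      _ = m.factorial * (k.choose m * c ^ m) := by ring
  exact Nat.le_of_mul_le_mul_left h3 (Nat.factorial_pos m)

/-- Let `|U| = k`, `|W| = n` with `n ≥ 8` and `k ≥ ⌊ln n⌋`, and let `f` map the
`⌊ln n⌋`-element subsets of `U` into `W`. Then some `w ∈ W` satisfies
`|⋃ f⁻¹[{w}]| ≥ k / e⁴`. -/
theorem inverse_image_size {α β : Type*} [DecidableEq α] [DecidableEq β]
    (U : Finset α) (W : Finset β) (k n : ℕ)
    (hU : U.card = k) (hW : W.card = n) (hn : 8 ≤ n)
    (hk : ⌊Real.log n⌋₊ ≤ k)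
    (f : Finset α → β)
    (hf : ∀ S ∈ U.powersetCard ⌊Real.log n⌋₊, f S ∈ W) :
    ∃ w ∈ W,
      (k : ℝ) / Real.exp 4 ≤
        ((((U.powersetCard ⌊Real.log n⌋₊).filter (fun S => f S = w)).biUnion id).card : ℝ) := by
  by_contra hcon
  push_neg at hcon
  set m := ⌊Real.log n⌋₊ with hm
  set P := U.powersetCard m with hPdef
  set c := ⌊(k : ℝ) / Real.exp 4⌋₊ with hc
  have hn0 : (0 : ℝ) < n := by positivity
  have hlogn : (1 : ℝ) ≤ Real.log n := by
    rw [Real.le_log_iff_exp_le hn0]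
    calc Real.exp 1 ≤ 3 := by
          have := Real.exp_one_lt_d9; linarith
      _ ≤ (n : ℝ) := by exact_mod_cast by omega
  have hm1 : 1 ≤ m := Nat.le_floor (by exact_mod_cast hlogn)
  have hk1 : 1 ≤ k := le_trans hm1 hk
  have hE : (0 : ℝ) < Real.exp 4 := Real.exp_pos 4
  have hck : c ≤ k := by
    apply Nat.floor_le_of_le
    rw [div_le_iff₀ hE]
    nlinarith [Real.one_le_exp (by norm_num : (0:ℝ) ≤ 4), (by exact_mod_cast hk1 : (1:ℝ) ≤ k)]
  -- counting: k.choose m ≤ n * c.choose m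
  have hP : P.card = k.choose m := by rw [hPdef, Finset.card_powersetCard, hU]
  have hsub : P ⊆ W.biUnion (fun w => P.filter (fun S => f S = w)) := by
    intro S hS
    exact Finset.mem_biUnion.mpr ⟨f S, hf S hS, Finset.mem_filter.mpr ⟨hS, rfl⟩⟩
  have hcount : k.choose m ≤ n * c.choose m := by
    calc k.choose m = P.card := hP.symm
      _ ≤ (W.biUnion (fun w => P.filter (fun S => f S = w))).card :=
          Finset.card_le_card hsub
      _ ≤ ∑ w ∈ W, (P.filter (fun S => f S = w)).card := Finset.card_biUnion_le
      _ ≤ ∑ _w ∈ W, c.choose m := by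
          apply Finset.sum_le_sum
          intro w hw
          have hfil : P.filter (fun S => f S = w) ⊆
              ((P.filter (fun S => f S = w)).biUnion id).powersetCard m := by
            intro S hS
            rw [Finset.mem_powersetCard]
            constructor
            · intro x hx
              exact Finset.mem_biUnion.mpr ⟨S, hS, hx⟩
            · exact (Finset.mem_powersetCard.mp (Finset.mem_filter.mp hS).1).2
          calc (P.filter (fun S => f S = w)).card
              ≤ (((P.filter (fun S => f S = w)).biUnion id).powersetCard m).card :=
                Finset.card_le_card hfil
            _ = (((P.filter (fun S => f S = w)).biUnion id).card).choose m :=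
                Finset.card_powersetCard _ _
            _ ≤ c.choose m := by
                apply Nat.choose_le_choose
                apply Nat.le_floor
                exact le_of_lt (hcon w hw)
      _ = n * c.choose m := by rw [Finset.sum_const, smul_eq_mul, hW]
  -- analytic: n * c.choose m < k.choose m
  have hcr : (c : ℝ) ≤ (k : ℝ) / Real.exp 4 := Nat.floor_le (by positivity)
  have hnexp : (n : ℝ) < Real.exp (4 * m) := by
    have h1 : Real.log n < m + 1 := Nat.lt_floor_add_one _
    have h2 : Real.exp (4 * Real.log n - 4) ≤ Real.exp (4 * m) := by
      apply Real.exp_le_exp.mpr; linarith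
    have h3 : Real.exp (4 * Real.log n - 4) = (n : ℝ) ^ 4 / Real.exp 4 := by
      rw [Real.exp_sub]
      congr 1
      rw [show (4 : ℝ) * Real.log n = ((4 : ℕ) : ℝ) * Real.log n by norm_num,
        Real.exp_nat_mul, Real.exp_log hn0]
    have h4 : (n : ℝ) < (n : ℝ) ^ 4 / Real.exp 4 := by
      rw [lt_div_iff₀ hE]
      have he : Real.exp 4 < 55 := by
        have h := Real.exp_one_lt_d9
        have hp := Real.exp_pos 1
        have hsq : Real.exp 1 ^ 2 < 7.39 := by nlinarith
        calc Real.exp 4 = ((Real.exp 1) ^ 2) ^ 2 := by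
              rw [← pow_mul, show 2 * 2 = 4 from rfl,
                show Real.exp 1 ^ 4 = Real.exp (((4:ℕ):ℝ) * 1) by
                  rw [Real.exp_nat_mul]]
              norm_num
          _ < 55 := by nlinarith [sq_nonneg (Real.exp 1)]
      have hn8 : (8 : ℝ) ≤ n := by exact_mod_cast hn
      have hn3 : (512 : ℝ) ≤ (n : ℝ) ^ 3 := by
        calc (512 : ℝ) = 8 ^ 3 := by norm_num
          _ ≤ (n : ℝ) ^ 3 := pow_le_pow_left₀ (by norm_num) hn8 3
      nlinarith [hn0, he, hn3]
    linarith
  have hkm : (0 : ℝ) < (k : ℝ) ^ m := by positivity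
  have hkey : (n : ℝ) * (c : ℝ) ^ m < (k : ℝ) ^ m := by
    have h5 : (c : ℝ) ^ m ≤ ((k : ℝ) / Real.exp 4) ^ m :=
      pow_le_pow_left₀ (by positivity) hcr m
    have h6 : ((k : ℝ) / Real.exp 4) ^ m = (k : ℝ) ^ m / Real.exp (4 * m) := by
      rw [div_pow, ← Real.exp_nat_mul]
      norm_num
      ring_nf
    have h7 : (n : ℝ) * ((k : ℝ) ^ m / Real.exp (4 * m)) < (k : ℝ) ^ m := by
      rw [mul_div_assoc']
      rw [div_lt_iff₀ (Real.exp_pos _)]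
      calc (n : ℝ) * (k : ℝ) ^ m = (k : ℝ) ^ m * n := by ring
        _ < (k : ℝ) ^ m * Real.exp (4 * m) := by
            exact mul_lt_mul_of_pos_left hnexp hkm
    calc (n : ℝ) * (c : ℝ) ^ m ≤ (n : ℝ) * ((k : ℝ) ^ m / Real.exp (4 * m)) := by
          apply mul_le_mul_of_nonneg_left _ (le_of_lt hn0)
          rw [← h6]; exact h5
      _ < (k : ℝ) ^ m := h7
  have hchoose := choose_aux m c k hck
  have hchooseR : (c.choose m : ℝ) * (k : ℝ) ^ m ≤ (k.choose m : ℝ) * (c : ℝ) ^ m := by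
    exact_mod_cast hchoose
  have hkch : (0 : ℝ) < (k.choose m : ℝ) := by
    exact_mod_cast Nat.choose_pos hk
  have hfinal : (n : ℝ) * (c.choose m : ℝ) < (k.choose m : ℝ) := by
    have h8 : (n : ℝ) * (c.choose m : ℝ) * (k : ℝ) ^ m
        ≤ (k.choose m : ℝ) * ((n : ℝ) * (c : ℝ) ^ m) := by
      calc (n : ℝ) * (c.choose m : ℝ) * (k : ℝ) ^ m
          = (n : ℝ) * ((c.choose m : ℝ) * (k : ℝ) ^ m) := by ring
        _ ≤ (n : ℝ) * ((k.choose m : ℝ) * (c : ℝ) ^ m) :=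
            mul_le_mul_of_nonneg_left hchooseR (le_of_lt hn0)
        _ = (k.choose m : ℝ) * ((n : ℝ) * (c : ℝ) ^ m) := by ring
    have h9 : (k.choose m : ℝ) * ((n : ℝ) * (c : ℝ) ^ m)
        < (k.choose m : ℝ) * (k : ℝ) ^ m := mul_lt_mul_of_pos_left hkey hkch
    have h10 : (n : ℝ) * (c.choose m : ℝ) * (k : ℝ) ^ m
        < (k.choose m : ℝ) * (k : ℝ) ^ m := lt_of_le_of_lt h8 h9
    exact lt_of_mul_lt_mul_right h10 (le_of_lt hkm)
  have : (k.choose m : ℝ) ≤ (n : ℝ) * (c.choose m : ℝ) := by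
    exact_mod_cast hcount
  linarith
end

section
/- Let f ≥ 0 and n > 2f be integers, and let (G_r)_{r ≥ 1} be a sequence of communication graphs on n nodes such that |In_i(G_r)| ≥ n − f for every round r ≥ 1 and every node i ∈ [n]. Then the dynamic radius of (G_r)_{r ≥ 1} is at most 2; that is, there exists a node m ∈ [n] that is a broadcaster in the product graph G_1 ∘ G_2. -/
/-- With `n > 2f` and every node having at least `n − f` in-neighbors in every round, some node
is a broadcaster in the product `G_1 ∘ G_2` of the first two communication graphs (here `G r`,
`r ≥ 0`, is the graph of round `r + 1`); hence the dynamic radius is at most `2`. -/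
theorem async_dynamic_radius_two (n f : ℕ) (hnf : 2 * f < n)
    (G : ℕ → Fin n → Fin n → Prop)
    (hself : ∀ r i, G r i i)
    (hin : ∀ (r : ℕ) (i : Fin n), n - f ≤ {j : Fin n | G r j i}.ncard) :
    ∃ m : Fin n, ∀ i : Fin n, ∃ j : Fin n, G 0 m j ∧ G 1 j i := by
  classical
  have hn0 : 0 < n := lt_of_le_of_lt (Nat.zero_le _) hnf
  have : NeZero n := ⟨hn0.ne'⟩
  set A : Fin n → Finset (Fin n) := fun m => Finset.univ.filter (fun j => G 0 m j) with hA
  have hinF : ∀ (r : ℕ) (i : Fin n),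
      n - f ≤ (Finset.univ.filter (fun j => G r j i)).card := by
    intro r i
    have h := hin r i
    have heq : {j : Fin n | G r j i} = ↑(Finset.univ.filter (fun j => G r j i)) := by
      ext j; simp
    rwa [heq, Set.ncard_coe_finset] at h
  -- double counting: some node has out-degree ≥ n - f in G 0
  have hsum : n * (n - f) ≤ ∑ m : Fin n, (A m).card := by
    have h2 : ∑ i : Fin n, (Finset.univ.filter (fun j => G 0 j i)).card
        = ∑ m : Fin n, (A m).card := by
      simp only [Finset.card_filter, hA]
      exact Finset.sum_comm
    calc n * (n - f) = ∑ _i : Fin n, (n - f) := by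
          simp [Finset.card_univ]
      _ ≤ ∑ i : Fin n, (Finset.univ.filter (fun j => G 0 j i)).card :=
          Finset.sum_le_sum (fun i _ => hinF 0 i)
      _ = ∑ m : Fin n, (A m).card := h2
  have hex : ∃ m : Fin n, n - f ≤ (A m).card := by
    by_contra hcon
    push_neg at hcon
    have hlt : ∑ m : Fin n, (A m).card < ∑ _m : Fin n, (n - f) :=
      Finset.sum_lt_sum_of_nonempty Finset.univ_nonempty (fun m _ => hcon m)
    have : ∑ _m : Fin n, (n - f) = n * (n - f) := by simp [Finset.card_univ]
    omega
  obtain ⟨m, hm⟩ := hex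
  refine ⟨m, fun i => ?_⟩
  set B : Finset (Fin n) := Finset.univ.filter (fun j => G 1 j i) with hB
  have hBcard : n - f ≤ B.card := hinF 1 i
  have hun : (A m ∪ B).card ≤ n := by
    have := Finset.card_le_univ (A m ∪ B)
    simpa [Finset.card_univ] using this
  have hkey : (A m ∪ B).card + (A m ∩ B).card = (A m).card + B.card :=
    Finset.card_union_add_card_inter _ _
  have hpos : 0 < (A m ∩ B).card := by omega
  obtain ⟨j, hj⟩ := Finset.card_pos.mp hpos
  rw [Finset.mem_inter] at hj
  refine ⟨j, ?_, ?_⟩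
  · have := hj.1; simpa [hA] using this
  · have := hj.2; simpa [hB] using this
end
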